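/- The Carlitz q-Fibonacci polynomials, defined by the recurrence F_n(x,s,q) = x F_{n-1}(x,s,q) + q^{n-2} s F_{n-2}(x,s,q) with F_0 = 0, F_1 = 1, have the explicit form F_n(x,s,q) = Σ_{k=0}^{⌊(n-1)/2⌋} q^{k²} [n-1-k choose k]_q s^k x^{n-1-2k}, where [· choose ·]_q is the Gaussian binomial coefficient. -/

import Mathlib

def gaussBinom {R : Type*} [CommRing R] (q : R) : ℕ → ℕ → R
  | _, 0 => 1
  | 0, _ + 1 => 0
  | n + 1, k + 1 => q ^ (k + 1) * gaussBinom q n (k + 1) + gaussBinom q n k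

def carlitzFib {R : Type*} [CommRing R] (x s q : R) : ℕ → R
  | 0 => 0
  | 1 => 1
  | n + 2 => x * carlitzFib x s q (n + 1) + q ^ n * s * carlitzFib x s q n

/-!
The defining recurrence of `gaussBinom` is the q-Pascal rule
`[n+1, k+1] = q^(k+1) [n, k+1] + [n, k]`; its mirror image
`[n+1, k+1] = [n, k+1] + q^(n-k) [n, k]` is exactly the recurrence satisfied by the
coefficient `q^(k²) [n-k, k]` of `s^k x^(n-2k)` in `F (n+1)`, so the explicit sum satisfies
the recurrence of `carlitzFib` term by term.
-/

section
variable {R : Type*} [CommRing R] (q : R)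

theorem gaussBinom_zero_right (n : ℕ) : gaussBinom q n 0 = 1 := by
  cases n <;> rfl

theorem gaussBinom_succ_succ (n k : ℕ) :
    gaussBinom q (n + 1) (k + 1) = q ^ (k + 1) * gaussBinom q n (k + 1) + gaussBinom q n k :=
  rfl

theorem gaussBinom_eq_zero_of_lt {n k : ℕ} (h : n < k) : gaussBinom q n k = 0 := by
  induction n generalizing k with
  | zero => obtain ⟨k, rfl⟩ := Nat.exists_eq_succ_of_ne_zero h.ne'; rfl
  | succ n ih =>
    obtain ⟨k, rfl⟩ := Nat.exists_eq_succ_of_ne_zero (by omega : k ≠ 0)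
    rw [gaussBinom_succ_succ, ih (by omega), ih (by omega), mul_zero, add_zero]

theorem gaussBinom_succ_succ' :
    ∀ k j : ℕ, gaussBinom q (k + j + 1) (k + 1) =
      gaussBinom q (k + j) (k + 1) + q ^ j * gaussBinom q (k + j) k
  | k, 0 => by
    rw [add_zero, gaussBinom_succ_succ, gaussBinom_eq_zero_of_lt q (Nat.lt_succ_self k)]
    ring
  | 0, j + 1 => by
    have ih := gaussBinom_succ_succ' 0 j
    have hj := gaussBinom_succ_succ q j 0
    simp only [zero_add, gaussBinom_zero_right] at ih hj ⊢
    rw [gaussBinom_succ_succ, gaussBinom_zero_right]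
    linear_combination q * ih - hj
  | k + 1, j + 1 => by
    have ih_j := gaussBinom_succ_succ' (k + 1) j
    have ih_k := gaussBinom_succ_succ' k (j + 1)
    have hk := gaussBinom_succ_succ q (k + j + 1) k
    have hk' := gaussBinom_succ_succ q (k + j + 1) (k + 1)
    rw [show k + 1 + (j + 1) = k + j + 1 + 1 by omega]
    rw [show k + 1 + j = k + j + 1 by omega, show k + (j + 1) = k + j + 1 by omega] at *
    rw [gaussBinom_succ_succ]
    linear_combination q ^ (k + 2) * ih_j - hk' - q ^ (j + 1) * hk + ih_k

end

section
variable {R : Type*} [CommRing R] (x s q : R)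

/-- The coefficient of `s ^ k` in `carlitzFib x s q (n + 1)`. -/
def carlitzTerm (n k : ℕ) : R :=
  q ^ (k ^ 2) * gaussBinom q (n - k) k * s ^ k * x ^ (n - 2 * k)

theorem carlitzTerm_zero_right (n : ℕ) : carlitzTerm x s q n 0 = x ^ n := by
  simp [carlitzTerm, gaussBinom_zero_right]

theorem carlitzTerm_eq_zero_of_lt {n k : ℕ} (h : n < 2 * k) : carlitzTerm x s q n k = 0 := by
  rw [carlitzTerm, gaussBinom_eq_zero_of_lt q (by omega), mul_zero, zero_mul, zero_mul]

theorem carlitzTerm_succ_succ (m k : ℕ) :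
    carlitzTerm x s q (m + 2) (k + 1) =
      x * carlitzTerm x s q (m + 1) (k + 1) + q ^ (m + 1) * s * carlitzTerm x s q m k := by
  rcases lt_or_ge m (2 * k) with h | h
  · rw [carlitzTerm_eq_zero_of_lt x s q (by omega), carlitzTerm_eq_zero_of_lt x s q (by omega),
      carlitzTerm_eq_zero_of_lt x s q h]
    ring
  obtain ⟨j, rfl⟩ := Nat.exists_eq_add_of_le h
  simp only [carlitzTerm]
  rw [show 2 * k + j + 2 - (k + 1) = k + j + 1 by omega,
    show 2 * k + j + 1 - (k + 1) = k + j by omega, show 2 * k + j - k = k + j by omega,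
    show 2 * k + j + 2 - 2 * (k + 1) = j by omega, show 2 * k + j - 2 * k = j by omega,
    gaussBinom_succ_succ']
  rcases j with _ | j
  · -- the truncated exponent of `x` is off by one here, but its coefficient `[k, k+1]` vanishes
    rw [gaussBinom_eq_zero_of_lt q (by omega : k + 0 < k + 1)]
    ring
  · rw [show 2 * k + (j + 1) + 1 - 2 * (k + 1) = j by omega]
    ring

/-- Stated for every long enough range, so that the induction never meets boundary terms. -/
theorem carlitzFib_succ_eq_sum (n N : ℕ) (hN : n < 2 * N) :
    carlitzFib x s q (n + 1) = ∑ k ∈ Finset.range N, carlitzTerm x s q n k := by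
  obtain ⟨N, rfl⟩ := Nat.exists_eq_succ_of_ne_zero (by omega : N ≠ 0)
  induction n using Nat.twoStepInduction generalizing N with
  | zero | one =>
    rw [Finset.sum_range_succ', carlitzTerm_zero_right,
      Finset.sum_eq_zero fun k _ => carlitzTerm_eq_zero_of_lt x s q (by omega)]
    simp [carlitzFib]
  | more m ih₁ ih₂ =>
    obtain ⟨N, rfl⟩ := Nat.exists_eq_succ_of_ne_zero (by omega : N ≠ 0)
    have hF : carlitzFib x s q (m + 3) =
        x * carlitzFib x s q (m + 2) + q ^ (m + 1) * s * carlitzFib x s q (m + 1) := rfl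
    rw [hF, ih₂ (N + 1) (by omega), ih₁ N (by omega)]
    simp only [Finset.sum_range_succ', carlitzTerm_succ_succ, Finset.sum_add_distrib,
      ← Finset.mul_sum, carlitzTerm_zero_right]
    ring

end

theorem carlitzFib_explicit {R : Type*} [CommRing R] (x s q : R) (n : ℕ) (hn : 1 ≤ n) :
    carlitzFib x s q n =
      ∑ k ∈ Finset.range ((n - 1) / 2 + 1),
        q ^ (k ^ 2) * gaussBinom q (n - 1 - k) k * s ^ k * x ^ (n - 1 - 2 * k) := by
  obtain ⟨m, rfl⟩ : ∃ m, n = m + 1 := ⟨n - 1, by omega⟩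
  rw [Nat.add_sub_cancel]
  exact carlitzFib_succ_eq_sum x s q m _ (by omega)
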